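/- Hilbert-space Hoeffding bound for mean embeddings: let W₁,…,Wₙ be i.i.d. random elements of a set W and φ : W → H a measurable feature map into a Hilbert space H with ‖φ(w)‖ ≤ κ for all w. Then for any δ ∈ (0,1), with probability at least 1 − δ, ‖(1/n) Σᵢ φ(Wᵢ) − E[φ(W)]‖_H ≤ 4κ ln(2/δ) / √n. -/

import Mathlib

open MeasureTheory ProbabilityTheory Real
open scoped ENNReal NNReal
set_option maxHeartbeats 1000000

lemma chord_lintegral {W : Type*} [MeasurableSpace W] (ν : Measure W) [IsProbabilityMeasure ν]
    (r : W → ℝ) (hr : Measurable r) (M θ : ℝ) (hM : 0 ≤ M)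
    (hbd : ∀ w, |r w| ≤ M) (hmean : ∫ w, r w ∂ν = 0) :
    ∫⁻ w, ENNReal.ofReal (Real.exp (θ * r w)) ∂ν ≤ ENNReal.ofReal (Real.exp (θ^2 * M^2 / 2)) := by
  rcases eq_or_lt_of_le hM with hM0 | hM0
  · have hr0 : ∀ w, r w = 0 := fun w => by
      have := hbd w; rw [← hM0] at this; exact abs_eq_zero.mp (le_antisymm this (abs_nonneg _))
    simp only [hr0, mul_zero, Real.exp_zero, ENNReal.ofReal_one, lintegral_one, measure_univ]
    exact ENNReal.one_le_ofReal.mpr (Real.one_le_exp (by positivity))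
  · set u := θ * M with hu
    have hpt : ∀ w, Real.exp (θ * r w) ≤ Real.cosh u + (Real.sinh u / M) * r w := by
      intro w
      have hb := hbd w
      have ha1 : (0:ℝ) ≤ (M - r w)/(2*M) := by
        apply div_nonneg _ (by linarith)
        have := (abs_le.mp hb).2; linarith
      have ha2 : (0:ℝ) ≤ (M + r w)/(2*M) := by
        apply div_nonneg _ (by linarith)
        have := (abs_le.mp hb).1; linarith
      have hsum : (M - r w)/(2*M) + (M + r w)/(2*M) = 1 := by field_simp; ring
      have hcx := convexOn_exp.2 (Set.mem_univ (-u)) (Set.mem_univ u) ha1 ha2 hsum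
      simp only [smul_eq_mul] at hcx
      have harg : (M - r w)/(2*M) * (-u) + (M + r w)/(2*M) * u = θ * r w := by
        field_simp [hu]; ring
      rw [harg] at hcx
      refine hcx.trans (le_of_eq ?_)
      rw [Real.cosh_eq, Real.sinh_eq]
      field_simp
      ring
    have hrint : Integrable r ν := by
      refine Integrable.mono' (integrable_const M) hr.aestronglyMeasurable ?_
      exact Filter.Eventually.of_forall fun w => by simpa using hbd w
    have hint2 : Integrable (fun w => Real.cosh u + (Real.sinh u / M) * r w) ν :=
      (integrable_const _).add (hrint.const_mul _)
    calc ∫⁻ w, ENNReal.ofReal (Real.exp (θ * r w)) ∂ν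
        ≤ ∫⁻ w, ENNReal.ofReal (Real.cosh u + (Real.sinh u / M) * r w) ∂ν :=
          lintegral_mono fun w => ENNReal.ofReal_le_ofReal (hpt w)
      _ = ENNReal.ofReal (∫ w, (Real.cosh u + (Real.sinh u / M) * r w) ∂ν) := by
          rw [ofReal_integral_eq_lintegral_ofReal hint2]
          exact Filter.Eventually.of_forall fun w => le_trans (Real.exp_pos _).le (hpt w)
      _ ≤ ENNReal.ofReal (Real.exp (θ^2 * M^2 / 2)) := by
          apply ENNReal.ofReal_le_ofReal
          rw [integral_add (integrable_const _) (hrint.const_mul _), integral_const,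
            integral_const_mul, hmean, mul_zero, add_zero, probReal_univ]
          simp only [ENNReal.toReal_one, one_smul]
          calc Real.cosh u ≤ Real.exp (u^2/2) := Real.cosh_le_exp_half_sq u
            _ = Real.exp (θ^2 * M^2 / 2) := by rw [hu]; ring_nf


lemma step_bound {Ω H : Type*} [MeasurableSpace Ω]
    [NormedAddCommGroup H] [InnerProductSpace ℝ H]
    [SecondCountableTopology H] [MeasurableSpace H] [BorelSpace H]
    (P : Measure Ω) [IsProbabilityMeasure P] (T Y : Ω → H)
    (hT : Measurable T) (hY : Measurable Y)
    (hind : IndepFun T Y P) (κ b c : ℝ) (hb : 0 < b) (hκ0 : 0 ≤ κ)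
    (hYbd : ∀ ω, ‖Y ω‖ ≤ 2*κ)
    (hYmean : ∀ s : H, ∫ ω, (inner ℝ s (Y ω) : ℝ) ∂P = 0)
    (hbc : b + 8*b^2*κ^2 ≤ c) :
    ∫⁻ ω, ENNReal.ofReal (Real.exp (b * ‖T ω + Y ω‖^2)) ∂P
      ≤ ENNReal.ofReal (Real.exp (4*b*κ^2)) *
        ∫⁻ ω, ENNReal.ofReal (Real.exp (c * ‖T ω‖^2)) ∂P := by
  haveI : IsProbabilityMeasure (P.map T) := Measure.isProbabilityMeasure_map hT.aemeasurable
  haveI : IsProbabilityMeasure (P.map Y) := Measure.isProbabilityMeasure_map hY.aemeasurable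
  have hmap : P.map (fun ω => (T ω, Y ω)) = (P.map T).prod (P.map Y) :=
    (indepFun_iff_map_prod_eq_prod_map_map hT.aemeasurable hY.aemeasurable).mp hind
  set G : H × H → ℝ≥0∞ := fun p =>
    ENNReal.ofReal (Real.exp (b * ‖p.1‖^2 + 4*b*κ^2 + 2*b*(inner ℝ p.1 p.2 : ℝ))) with hGdef
  have hGc : Continuous G := by
    apply ENNReal.continuous_ofReal.comp
    apply Real.continuous_exp.comp
    apply Continuous.add
    · exact (continuous_const.mul ((continuous_norm.comp continuous_fst).pow 2)).add
        continuous_const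
    · exact continuous_const.mul continuous_inner
  have hmeasx : ∀ s : H, Measurable fun x : H =>
      ENNReal.ofReal (Real.exp (2*b*(inner ℝ s x : ℝ))) := by
    intro s
    exact (ENNReal.continuous_ofReal.comp (Real.continuous_exp.comp
      (continuous_const.mul (continuous_const.inner continuous_id)))).measurable
  have hpt : ∀ ω, ENNReal.ofReal (Real.exp (b * ‖T ω + Y ω‖^2)) ≤ G (T ω, Y ω) := by
    intro ω
    apply ENNReal.ofReal_le_ofReal
    apply Real.exp_le_exp.mpr
    have hexpand : ‖T ω + Y ω‖^2
        = ‖T ω‖^2 + 2*(inner ℝ (T ω) (Y ω) : ℝ) + ‖Y ω‖^2 := norm_add_sq_real _ _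
    have hXsq : ‖Y ω‖^2 ≤ 4*κ^2 := by nlinarith [hYbd ω, norm_nonneg (Y ω)]
    have h3 := mul_le_mul_of_nonneg_left hXsq hb.le
    rw [hexpand]
    nlinarith [h3]
  calc ∫⁻ ω, ENNReal.ofReal (Real.exp (b * ‖T ω + Y ω‖^2)) ∂P
      ≤ ∫⁻ ω, G (T ω, Y ω) ∂P := lintegral_mono hpt
    _ = ∫⁻ p, G p ∂(P.map fun ω => (T ω, Y ω)) :=
        (lintegral_map hGc.measurable (hT.prodMk hY)).symm
    _ = ∫⁻ s, ∫⁻ x, G (s, x) ∂(P.map Y) ∂(P.map T) := by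
        rw [hmap, lintegral_prod _ hGc.measurable.aemeasurable]
    _ ≤ ∫⁻ s, ENNReal.ofReal (Real.exp (b*‖s‖^2 + 4*b*κ^2)) *
          ENNReal.ofReal (Real.exp (8*b^2*κ^2*‖s‖^2)) ∂(P.map T) := by
        apply lintegral_mono
        intro s
        have hsplit : ∀ x : H, G (s, x)
            = ENNReal.ofReal (Real.exp (b*‖s‖^2 + 4*b*κ^2)) *
              ENNReal.ofReal (Real.exp (2*b*(inner ℝ s x : ℝ))) := by
          intro x
          rw [hGdef]
          simp only
          rw [← ENNReal.ofReal_mul (Real.exp_pos _).le, ← Real.exp_add]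
        simp only [hsplit]
        rw [lintegral_const_mul _ (hmeasx s)]
        apply mul_le_mul_right
        rw [lintegral_map (hmeasx s) hY]
        have hrm : Measurable fun ω => (inner ℝ s (Y ω) : ℝ) :=
          (continuous_const.inner continuous_id).measurable.comp hY
        have hrbd : ∀ ω, |(inner ℝ s (Y ω) : ℝ)| ≤ 2*κ*‖s‖ := by
          intro ω
          calc |(inner ℝ s (Y ω) : ℝ)| ≤ ‖s‖ * ‖Y ω‖ := abs_real_inner_le_norm _ _
            _ ≤ ‖s‖ * (2*κ) := mul_le_mul_of_nonneg_left (hYbd ω) (norm_nonneg s)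
            _ = 2*κ*‖s‖ := by ring
        have hch := chord_lintegral P (fun ω => (inner ℝ s (Y ω) : ℝ)) hrm
          (2*κ*‖s‖) (2*b) (mul_nonneg (by linarith) (norm_nonneg s)) hrbd (hYmean s)
        refine hch.trans (le_of_eq ?_)
        congr 1
        ring
    _ ≤ ∫⁻ s, ENNReal.ofReal (Real.exp (4*b*κ^2)) *
          ENNReal.ofReal (Real.exp (c * ‖s‖^2)) ∂(P.map T) := by
        apply lintegral_mono
        intro s
        dsimp only
        rw [← ENNReal.ofReal_mul (Real.exp_pos _).le, ← ENNReal.ofReal_mul (Real.exp_pos _).le,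
          ← Real.exp_add, ← Real.exp_add]
        apply ENNReal.ofReal_le_ofReal
        apply Real.exp_le_exp.mpr
        have hb2 : (b + 8*b^2*κ^2) * ‖s‖^2 ≤ c * ‖s‖^2 :=
          mul_le_mul_of_nonneg_right hbc (sq_nonneg _)
        nlinarith [hb2]
    _ = ENNReal.ofReal (Real.exp (4*b*κ^2)) *
          ∫⁻ ω, ENNReal.ofReal (Real.exp (c * ‖T ω‖^2)) ∂P := by
        have hmc : Measurable fun s : H => ENNReal.ofReal (Real.exp (c * ‖s‖^2)) :=
          (ENNReal.continuous_ofReal.comp (Real.continuous_exp.comp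
            (continuous_const.mul (continuous_norm.pow 2)))).measurable
        rw [lintegral_const_mul _ hmc, lintegral_map hmc hT]

/-- Hilbert-space Hoeffding bound for kernel mean embeddings: for i.i.d.
`W₁,…,Wₙ` and a measurable feature map `φ` bounded by `κ` into a separable
Hilbert space, with probability at least `1 − δ`,
`‖(1/n) Σᵢ φ(Wᵢ) − E[φ(W)]‖ ≤ 4 κ ln(2/δ) / √n`. -/
theorem mean_embedding_concentration
    {Ω W H : Type*} [MeasurableSpace Ω] [MeasurableSpace W]
    [NormedAddCommGroup H] [InnerProductSpace ℝ H] [CompleteSpace H]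
    [SecondCountableTopology H]
    (P : Measure Ω) [IsProbabilityMeasure P]
    (n : ℕ) (hn : 0 < n)
    (Wi : Fin n → Ω → W) (hmeas : ∀ i, Measurable (Wi i))
    (hindep : iIndepFun Wi P)
    (ν : Measure W) [IsProbabilityMeasure ν]
    (hident : ∀ i, Measure.map (Wi i) P = ν)
    (φ : W → H) (hφ : StronglyMeasurable φ)
    (κ : ℝ) (hκ : ∀ w, ‖φ w‖ ≤ κ)
    (δ : ℝ) (hδ : δ ∈ Set.Ioo (0 : ℝ) 1) :
    1 - ENNReal.ofReal δ ≤
      P {ω | ‖(n : ℝ)⁻¹ • ∑ i, φ (Wi i ω) - ∫ w, φ w ∂ν‖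
        ≤ 4 * κ * Real.log (2 / δ) / Real.sqrt n} := by
  obtain ⟨hδ0, hδ1⟩ := hδ
  classical
  borelize H
  have hW : Nonempty W := by
    by_contra h
    rw [not_nonempty_iff] at h
    have h1 : ν Set.univ = 1 := measure_univ
    rw [Set.univ_eq_empty_iff.mpr h, measure_empty] at h1
    exact zero_ne_one h1
  have hκ0 : 0 ≤ κ := le_trans (norm_nonneg _) (hκ hW.some)
  set L : ℝ := Real.log (2 / δ) with hLdef
  have hlog2 : (0.6931471803 : ℝ) < Real.log 2 := Real.log_two_gt_d9
  have hL : Real.log 2 < L := by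
    rw [hLdef]
    apply Real.log_lt_log (by norm_num)
    rw [lt_div_iff₀ hδ0]; linarith
  have hL0 : (0.6931471803 : ℝ) < L := lt_trans hlog2 hL
  have hLhalf : (1:ℝ)/2 < L := by linarith
  have hnR : (0:ℝ) < n := by exact_mod_cast hn
  have hsqrtn : (0:ℝ) < Real.sqrt n := Real.sqrt_pos.mpr hnR
  -- trivial case κ = 0
  rcases eq_or_lt_of_le hκ0 with hκz | hκpos
  · have hφ0 : ∀ w, φ w = 0 := fun w =>
      norm_le_zero_iff.mp (by rw [hκz]; exact hκ w)
    have hset : {ω | ‖(n : ℝ)⁻¹ • ∑ i, φ (Wi i ω) - ∫ w, φ w ∂ν‖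
        ≤ 4 * κ * L / Real.sqrt n} = Set.univ := by
      apply Set.eq_univ_iff_forall.mpr
      intro ω
      simp only [Set.mem_setOf_eq, hφ0, Finset.sum_const_zero, smul_zero, integral_zero,
        sub_zero, norm_zero, ← hκz, mul_zero, zero_mul, zero_div, le_refl]
    rw [hset, measure_univ]
    exact tsub_le_self
  -- main case
  set μ0 : H := ∫ w, φ w ∂ν with hμ0def
  have hφm : Measurable φ := hφ.measurable
  have hφint : Integrable φ ν :=
    Integrable.mono' (integrable_const κ) hφ.aestronglyMeasurable
      (Filter.Eventually.of_forall hκ)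
  have hμ0 : ‖μ0‖ ≤ κ := by
    rw [hμ0def]
    calc ‖∫ w, φ w ∂ν‖ ≤ ∫ w, ‖φ w‖ ∂ν := norm_integral_le_integral_norm φ
      _ ≤ ∫ _w, κ ∂ν := integral_mono hφint.norm (integrable_const κ) hκ
      _ = κ := by simp
  set X : Fin n → Ω → H := fun i ω => φ (Wi i ω) - μ0 with hXdef
  have hXm : ∀ i, Measurable (X i) := fun i => (hφm.comp (hmeas i)).sub measurable_const
  have hXbd : ∀ i ω, ‖X i ω‖ ≤ 2 * κ := fun i ω =>
    (norm_sub_le _ _).trans (by have := hκ (Wi i ω); linarith)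
  have hXindep : iIndepFun X P := by
    have := hindep.comp (fun _ (w : W) => φ w - μ0) (fun _ => hφm.sub measurable_const)
    exact this
  set S : ℕ → Ω → H := fun m ω => ∑ j ∈ Finset.univ.filter (fun j : Fin n => (j : ℕ) < m), X j ω
    with hSdef
  have hSm : ∀ m, Measurable (S m) := fun m =>
    Finset.measurable_sum _ fun j _ => hXm j
  -- constants
  set β : ℝ := (2*L - 1) / (8 * κ^2 * n) with hβdef
  have hβpos : 0 < β := div_pos (by linarith) (by positivity)
  set B : ℕ → ℝ := fun m => β / (1 + 8 * β * κ^2 * m) with hBdef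
  have hBpos : ∀ m, 0 < B m := fun m => by
    apply div_pos hβpos
    have : (0:ℝ) ≤ 8 * β * κ^2 * m := by positivity
    linarith
  have hBle : ∀ m, B m ≤ β := fun m => by
    have h0 : (0:ℝ) ≤ 8 * β * κ^2 * m := by positivity
    exact div_le_self hβpos.le (by linarith)
  have hBrec : ∀ m, B (m+1) + 8 * (B (m+1))^2 * κ^2 ≤ B m := by
    intro m
    have h1 : (0:ℝ) < 1 + 8 * β * κ^2 * m := by positivity
    have h2 : (0:ℝ) < 1 + 8 * β * κ^2 * ((m:ℝ)+1) := by positivity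
    have e2 : B (m+1) = β / (1 + 8 * β * κ^2 * ((m:ℝ)+1)) := by
      simp only [hBdef, Nat.cast_add, Nat.cast_one]
    have e1 : B m = β / (1 + 8 * β * κ^2 * m) := rfl
    rw [e1, e2]
    have key : β / (1 + 8 * β * κ^2 * ((m:ℝ)+1)) + 8 * (β / (1 + 8 * β * κ^2 * ((m:ℝ)+1)))^2 * κ^2
        = (β * (1 + 8 * β * κ^2 * ((m:ℝ)+1)) + 8 * β^2 * κ^2) / (1 + 8 * β * κ^2 * ((m:ℝ)+1))^2 := by
      field_simp
    rw [key, div_le_div_iff₀ (by positivity) h1]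
    have hpq : (1 + 8*β*κ^2*((m:ℝ)+1)) = (1 + 8*β*κ^2*(m:ℝ)) + 8*β*κ^2 := by ring
    nlinarith [mul_nonneg (mul_nonneg hβpos.le hβpos.le) (sq_nonneg κ), h1.le,
      mul_nonneg (mul_nonneg (mul_nonneg hβpos.le hβpos.le) (sq_nonneg κ)) (mul_nonneg (mul_nonneg hβpos.le (sq_nonneg κ)) (Nat.cast_nonneg m))]
  -- key induction on partial sums
  have key : ∀ m, m ≤ n →
      ∫⁻ ω, ENNReal.ofReal (Real.exp (B m * ‖S m ω‖^2)) ∂P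
        ≤ ENNReal.ofReal (Real.exp (4 * κ^2 * β * m)) := by
    intro m
    induction m with
    | zero =>
      intro _
      have hS0 : ∀ ω, S 0 ω = 0 := by
        intro ω
        show (∑ j ∈ Finset.univ.filter (fun j : Fin n => (j : ℕ) < 0), X j ω) = 0
        rw [Finset.filter_false_of_mem (fun j _ => Nat.not_lt_zero _)]
        exact Finset.sum_empty
      simp only [hS0, norm_zero, Nat.cast_zero, mul_zero, ne_eq, OfNat.ofNat_ne_zero,
        not_false_eq_true, zero_pow, Real.exp_zero, ENNReal.ofReal_one, lintegral_one,
        measure_univ, le_refl]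
    | succ m IH =>
      intro hm1
      have hmn : m < n := hm1
      specialize IH hmn.le
      set i0 : Fin n := ⟨m, hmn⟩ with hi0def
      have hbpos : 0 < B (m+1) := hBpos (m+1)
      have hfins : Finset.univ.filter (fun j : Fin n => (j : ℕ) < m+1)
          = insert i0 (Finset.univ.filter (fun j : Fin n => (j : ℕ) < m)) := by
        ext j
        simp only [Finset.mem_filter, Finset.mem_insert, Finset.mem_univ, true_and]
        constructor
        · intro hj
          rcases Nat.lt_succ_iff_lt_or_eq.mp hj with hj | hj
          · exact Or.inr hj
          · exact Or.inl (Fin.ext hj)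
        · rintro (hj | hj)
          · rw [hj]; exact Nat.lt_succ_self m
          · exact hj.trans (Nat.lt_succ_self m)
      have hi0 : i0 ∉ Finset.univ.filter (fun j : Fin n => (j : ℕ) < m) := by
        simp [hi0def]
      have hSsucc : ∀ ω, S (m+1) ω = S m ω + X i0 ω := by
        intro ω
        show (∑ j ∈ Finset.univ.filter (fun j : Fin n => (j : ℕ) < m+1), X j ω) = _
        rw [hfins, Finset.sum_insert hi0]
        exact add_comm _ _
      have hind1 : IndepFun (S m) (X i0) P := by
        have h := hXindep.indepFun_finsetSum_of_notMem hXm hi0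
        have he : S m = ∑ j ∈ Finset.univ.filter (fun j : Fin n => (j : ℕ) < m), X j := by
          funext ω
          rw [Finset.sum_apply]
        rw [he]
        exact h
      have hXmean : ∀ s : H, ∫ ω, (inner ℝ s (X i0 ω) : ℝ) ∂P = 0 := by
        intro s
        have hrm : Measurable fun w => (inner ℝ s (φ w - μ0) : ℝ) :=
          (continuous_const.inner continuous_id).measurable.comp (hφm.sub measurable_const)
        have h2 : ∫ ω, (inner ℝ s (φ (Wi i0 ω) - μ0) : ℝ) ∂P
            = ∫ w, (inner ℝ s (φ w - μ0) : ℝ) ∂ν := by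
          rw [← hident i0, integral_map (hmeas i0).aemeasurable hrm.aestronglyMeasurable]
        show ∫ ω, (inner ℝ s (φ (Wi i0 ω) - μ0) : ℝ) ∂P = 0
        have hintsub : Integrable (fun w => φ w - μ0) ν := hφint.sub (integrable_const μ0)
        rw [h2, integral_inner hintsub s]
        rw [integral_sub hφint (integrable_const μ0), integral_const, probReal_univ]
        simp [hμ0def]
      have hstep := step_bound P (S m) (X i0) (hSm m) (hXm i0) hind1 κ (B (m+1)) (B m)
        hbpos hκ0 (hXbd i0) hXmean (by have := hBrec m; linarith)
      calc ∫⁻ ω, ENNReal.ofReal (Real.exp (B (m+1) * ‖S (m+1) ω‖^2)) ∂P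
          = ∫⁻ ω, ENNReal.ofReal (Real.exp (B (m+1) * ‖S m ω + X i0 ω‖^2)) ∂P := by
            apply lintegral_congr
            intro ω
            rw [hSsucc ω]
        _ ≤ ENNReal.ofReal (Real.exp (4*(B (m+1))*κ^2)) *
              ∫⁻ ω, ENNReal.ofReal (Real.exp (B m * ‖S m ω‖^2)) ∂P := hstep
        _ ≤ ENNReal.ofReal (Real.exp (4*(B (m+1))*κ^2)) *
              ENNReal.ofReal (Real.exp (4*κ^2*β*m)) := mul_le_mul_right IH _
        _ ≤ ENNReal.ofReal (Real.exp (4 * κ^2 * β * (m+1 : ℕ))) := by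
            rw [← ENNReal.ofReal_mul (Real.exp_pos _).le, ← Real.exp_add]
            apply ENNReal.ofReal_le_ofReal
            apply Real.exp_le_exp.mpr
            have hble := hBle (m+1)
            push_cast
            nlinarith [sq_nonneg κ, hκpos]
  -- identify S n with the quantity in the statement
  have hfull : Finset.univ.filter (fun j : Fin n => (j : ℕ) < n) = Finset.univ := by
    apply Finset.filter_true_of_mem
    intro j _
    exact j.isLt
  have hSn : ∀ ω, (n : ℝ)⁻¹ • ∑ i, φ (Wi i ω) - μ0 = (n:ℝ)⁻¹ • S n ω := by
    intro ω
    have h1 : S n ω = (∑ i, φ (Wi i ω)) - n • μ0 := by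
      show (∑ j ∈ Finset.univ.filter (fun j : Fin n => (j : ℕ) < n), X j ω) = _
      rw [hfull, Finset.sum_sub_distrib]
      congr 1
      rw [Finset.sum_const, Finset.card_univ, Fintype.card_fin]
    rw [h1, smul_sub]
    congr 1
    rw [← Nat.cast_smul_eq_nsmul ℝ, smul_smul, inv_mul_cancel₀ (ne_of_gt hnR), one_smul]
  set t : ℝ := 4*κ*L*Real.sqrt n with htdef
  have hLpos : 0 < L := by linarith
  have ht0 : 0 ≤ t := by positivity
  have hss : Real.sqrt n * Real.sqrt n = (n:ℝ) := Real.mul_self_sqrt hnR.le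
  -- bad event inclusion
  have hsub : {ω | ‖(n : ℝ)⁻¹ • ∑ i, φ (Wi i ω) - μ0‖ ≤ 4 * κ * L / Real.sqrt n}ᶜ ⊆
      {ω | ENNReal.ofReal (Real.exp (B n * t^2))
        ≤ ENNReal.ofReal (Real.exp (B n * ‖S n ω‖^2))} := by
    intro ω hω
    rw [Set.mem_compl_iff, Set.mem_setOf_eq, not_le] at hω
    rw [Set.mem_setOf_eq]
    apply ENNReal.ofReal_le_ofReal
    apply Real.exp_le_exp.mpr
    apply mul_le_mul_of_nonneg_left ?_ (hBpos n).le
    have h1 : ‖(n:ℝ)⁻¹ • S n ω‖ = (n:ℝ)⁻¹ * ‖S n ω‖ := by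
      rw [norm_smul, Real.norm_eq_abs, abs_of_nonneg (by positivity)]
    rw [hSn ω, h1] at hω
    have h3 := mul_lt_mul_of_pos_left hω hnR
    rw [← mul_assoc, mul_inv_cancel₀ (ne_of_gt hnR), one_mul] at h3
    have h4 : (n:ℝ) * (4*κ*L / Real.sqrt n) = t := by
      rw [htdef]
      calc (n:ℝ) * (4*κ*L / Real.sqrt n) = 4*κ*L*((n:ℝ)/Real.sqrt n) := by ring
        _ = 4*κ*L*Real.sqrt n := by rw [Real.div_sqrt]
    rw [h4] at h3
    nlinarith [h3, ht0]
  -- Markov / Chernoff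
  have hfm : Measurable fun ω => ENNReal.ofReal (Real.exp (B n * ‖S n ω‖^2)) :=
    ((ENNReal.continuous_ofReal.comp (Real.continuous_exp.comp
      (continuous_const.mul (continuous_norm.pow 2)))).measurable).comp (hSm n)
  have hε0 : (ENNReal.ofReal (Real.exp (B n * t^2))) ≠ 0 :=
    (ENNReal.ofReal_pos.mpr (Real.exp_pos _)).ne'
  have hεtop : (ENNReal.ofReal (Real.exp (B n * t^2))) ≠ ⊤ := ENNReal.ofReal_ne_top
  have hmark := mul_meas_ge_le_lintegral₀ (μ := P) hfm.aemeasurable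
      (ENNReal.ofReal (Real.exp (B n * t^2)))
  have h5 : ENNReal.ofReal (Real.exp (B n * t^2)) *
      P ({ω | ‖(n : ℝ)⁻¹ • ∑ i, φ (Wi i ω) - μ0‖ ≤ 4 * κ * L / Real.sqrt n}ᶜ)
        ≤ ENNReal.ofReal (Real.exp (4 * κ^2 * β * n)) :=
    le_trans (mul_le_mul_right (measure_mono hsub) _) (hmark.trans (key n le_rfl))
  have hPbad : P ({ω | ‖(n : ℝ)⁻¹ • ∑ i, φ (Wi i ω) - μ0‖ ≤ 4 * κ * L / Real.sqrt n}ᶜ)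
      ≤ ENNReal.ofReal δ := by
    have h6 : P ({ω | ‖(n : ℝ)⁻¹ • ∑ i, φ (Wi i ω) - μ0‖ ≤ 4 * κ * L / Real.sqrt n}ᶜ)
        ≤ ENNReal.ofReal (Real.exp (4 * κ^2 * β * n)) /
          ENNReal.ofReal (Real.exp (B n * t^2)) :=
      (ENNReal.le_div_iff_mul_le (Or.inl hε0) (Or.inl hεtop)).mpr (by rwa [mul_comm] at h5)
    refine h6.trans ?_
    rw [← ENNReal.ofReal_div_of_pos (Real.exp_pos _), ← Real.exp_sub]
    apply ENNReal.ofReal_le_ofReal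
    rw [← Real.exp_log hδ0]
    apply Real.exp_le_exp.mpr
    -- arithmetic
    have h8 : 8*β*κ^2*(n:ℝ) = 2*L-1 := by
      rw [hβdef]
      field_simp
    have hBn : B n = β / (2*L) := by
      show β / (1 + 8*β*κ^2*(n:ℕ)) = β / (2*L)
      congr 1
      linarith [h8]
    have htsq : t^2 = 16*κ^2*L^2*(n:ℝ) := by
      rw [htdef]
      linear_combination (16*κ^2*L^2) * hss
    have hBnt : B n * t^2 = (2*L-1)*L := by
      rw [hBn, htsq]
      rw [div_mul_eq_mul_div, div_eq_iff (ne_of_gt (by linarith))]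
      linear_combination (2*L^2) * h8
    have h4k : 4*κ^2*β*(n:ℝ) = (2*L-1)/2 := by linarith [h8]
    have hlogδ : Real.log δ = Real.log 2 - L := by
      rw [hLdef, Real.log_div two_ne_zero (ne_of_gt hδ0)]
      ring
    rw [hBnt, h4k]
    calc (2*L-1)/2 - (2*L-1)*L ≤ Real.log 2 - L := by nlinarith [sq_nonneg (L - 3/4), hlog2, hL]
      _ = Real.log δ := hlogδ.symm
  rw [tsub_le_iff_right]
  calc (1:ℝ≥0∞) = P Set.univ := measure_univ.symm
    _ = P ({ω | ‖(n : ℝ)⁻¹ • ∑ i, φ (Wi i ω) - μ0‖ ≤ 4 * κ * L / Real.sqrt n} ∪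
          {ω | ‖(n : ℝ)⁻¹ • ∑ i, φ (Wi i ω) - μ0‖ ≤ 4 * κ * L / Real.sqrt n}ᶜ) := by
        rw [Set.union_compl_self]
    _ ≤ P {ω | ‖(n : ℝ)⁻¹ • ∑ i, φ (Wi i ω) - μ0‖ ≤ 4 * κ * L / Real.sqrt n} +
          P ({ω | ‖(n : ℝ)⁻¹ • ∑ i, φ (Wi i ω) - μ0‖ ≤ 4 * κ * L / Real.sqrt n}ᶜ) :=
        measure_union_le _ _
    _ ≤ P {ω | ‖(n : ℝ)⁻¹ • ∑ i, φ (Wi i ω) - μ0‖ ≤ 4 * κ * L / Real.sqrt n} +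
          ENNReal.ofReal δ := add_le_add_right hPbad _
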